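/- arXiv:1706.09680 — 2 statements merged into one kernel-verified Lean document; each statement's English description precedes it below -/
import Mathlib

section
/- Let q > p ≥ 2 be integers and set f(n) = s_φ(pn) + s_φ(qn). Then f is quasi-additive with respect to the Zeckendorf expansion: there exists r ≥ 0 such that f(n1+n2) = f(n1) + f(n2) for all positive integers n1, n2 that are r-separated at some position k, and f(n) = f(S(n)) for all positive integers n with v(n,r) = 0. -/
/-!
Write `ψ = -φ⁻¹` for the conjugate of the golden ratio. Since `F_{i+1} - φ F_i = ψ ^ i`, we
get `S(n) - φ n = ∑ ε_i(n) ψ ^ i`, and for admissible digits whose lowest `1` sits at place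
`m` this sum has absolute value between `ψ² |ψ| ^ m` and `φ |ψ| ^ m`. Now `φ (c n)` lies within
`c φ |ψ| ^ m` of the integer `c S(n)`, so the lowest digit of `c n` is at most `2c + 2` places
below that of `n`; if moreover `m ≥ 2c + 3`, then `S(c n)` and `c S(n)` are integers at
distance `< 1`, hence equal. At the top, `n < F_K` gives `c n < F_{K+2c}`. So multiplication
by `c` moves the Zeckendorf digits of `n` only boundedly many places: `r`-separated `n₁, n₂`
give `c n₁, c n₂` with disjoint, non-adjacent digit blocks, whose digits therefore just add up.
This makes `n ↦ s_φ(c n)` quasi-additive for every `c`, and quasi-additivity is stable under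
sums.
-/

open Classical in
/-- The Zeckendorf digits of `n`: `zeckDigit n i` is the coefficient of the
Fibonacci number `F_i` in the (unique) Zeckendorf representation of `n`. -/
noncomputable def zeckDigit (n : ℕ) : ℕ → ℕ :=
  if h : ∃ e : ℕ → ℕ, (∀ i, e i ≤ 1) ∧ (∀ i, i < 2 → e i = 0) ∧
      (∀ i, e i = 1 → e (i + 1) = 0) ∧ (∀ i, n + 2 ≤ i → e i = 0) ∧
      n = ∑ i ∈ Finset.range (n + 2), e i * Nat.fib i
  then Classical.choose h else fun _ => 0

/-- The Zeckendorf sum-of-digits function `s_φ`. -/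
noncomputable def sphi (n : ℕ) : ℕ := ∑ i ∈ Finset.range (n + 2), zeckDigit n i

/-- `v(n,k) = Σ_{2 ≤ i < k} ε_i(n) F_i` (digits below index 2 vanish). -/
noncomputable def zv (n k : ℕ) : ℕ := ∑ i ∈ Finset.range k, zeckDigit n i * Nat.fib i

/-- The Zeckendorf shift operator `S(n) = Σ_{k ≥ 2} F_{k+1} ε_k(n)`. -/
noncomputable def zshift (n : ℕ) : ℕ :=
  ∑ i ∈ Finset.range (n + 2), Nat.fib (i + 1) * zeckDigit n i

/-- `n1` and `n2` are `r`-separated at position `k`. -/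
def RSep (r k n1 n2 : ℕ) : Prop :=
  (∀ i, k - r ≤ i → zeckDigit n1 i = 0) ∧ (∀ i, i ≤ k + r → zeckDigit n2 i = 0)

/-- `g` is `r`-quasi-additive with respect to the Zeckendorf expansion. -/
def QuasiAdd (r : ℕ) (g : ℕ → ℕ) : Prop :=
  (∀ n1 n2 k, RSep r k n1 n2 → g (n1 + n2) = g n1 + g n2) ∧
  (∀ n, zv n r = 0 → g n = g (zshift n))

open Finset
open Nat (fib fib_add_two fib_mono)

structure IsZeckendorfDigits (e : ℕ → ℕ) : Prop where
  le_one : ∀ i, e i ≤ 1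
  eq_zero_of_lt_two : ∀ i < 2, e i = 0
  succ_eq_zero : ∀ i, e i = 1 → e (i + 1) = 0

namespace IsZeckendorfDigits

variable {e e' : ℕ → ℕ}

theorem eq_zero_or_eq_one (he : IsZeckendorfDigits e) (i : ℕ) : e i = 0 ∨ e i = 1 := by
  have := he.le_one i
  omega

theorem sum_range_lt_fib (he : IsZeckendorfDigits e) :
    ∀ K, ∑ i ∈ range (K + 1), e i * fib i < fib (K + 1)
  | 0 => by simp
  | 1 => by simp [sum_range_succ, he.eq_zero_of_lt_two 1 one_lt_two]
  | K + 2 => by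
    have hfib : fib (K + 3) = fib (K + 1) + fib (K + 2) := fib_add_two
    rw [sum_range_succ, hfib]
    rcases he.eq_zero_or_eq_one (K + 2) with h | h
    · have : ∑ i ∈ range (K + 2), e i * fib i < fib (K + 2) := he.sum_range_lt_fib (K + 1)
      rw [h, zero_mul, add_zero]
      omega
    · have hK : e (K + 1) = 0 := by
        rcases he.eq_zero_or_eq_one (K + 1) with h' | h'
        · exact h'
        · have : e (K + 2) = 0 := he.succ_eq_zero _ h'
          omega
      have := he.sum_range_lt_fib K
      rw [sum_range_succ, hK, h, zero_mul, add_zero, one_mul]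
      exact Nat.add_lt_add_right this _

theorem sum_range_lt_of_eq_one (he' : IsZeckendorfDigits e') {N : ℕ}
    (hN : e (N + 1) = 1) (hN' : e' (N + 1) = 0) :
    ∑ i ∈ range (N + 2), e' i * fib i < ∑ i ∈ range (N + 2), e i * fib i := by
  rw [sum_range_succ (fun i => e i * fib i), sum_range_succ (fun i => e' i * fib i), hN, hN']
  have := he'.sum_range_lt_fib N
  omega

theorem eq_of_sum_range_eq (he : IsZeckendorfDigits e) (he' : IsZeckendorfDigits e') :
    ∀ {N}, ∑ i ∈ range N, e i * fib i = ∑ i ∈ range N, e' i * fib i →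
      ∀ i < N, e i = e' i
  | 0, _, i, hi => absurd hi (Nat.not_lt_zero i)
  | N + 1, hsum, i, hi => by
    have htop : e N = e' N := by
      rcases N with _ | N
      · rw [he.eq_zero_of_lt_two 0 two_pos, he'.eq_zero_of_lt_two 0 two_pos]
      · rcases he.eq_zero_or_eq_one (N + 1) with h | h <;>
          rcases he'.eq_zero_or_eq_one (N + 1) with h' | h'
        · rw [h, h']
        · exact absurd hsum (he.sum_range_lt_of_eq_one h' h).ne
        · exact absurd hsum (he'.sum_range_lt_of_eq_one h h').ne'
        · rw [h, h']
    rw [sum_range_succ, sum_range_succ, htop, Nat.add_right_cancel_iff] at hsum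
    rcases Nat.lt_succ_iff_lt_or_eq.1 hi with hi | rfl
    · exact eq_of_sum_range_eq he he' hsum i hi
    · exact htop

end IsZeckendorfDigits

theorem exists_isZeckendorfDigits (n : ℕ) :
    ∃ e, IsZeckendorfDigits e ∧ (∀ i, n + 2 ≤ i → e i = 0) ∧
      n = ∑ i ∈ range (n + 2), e i * fib i := by
  classical
  set l := n.zeckendorf
  have hchain : (l ++ [0]).Pairwise (fun a b => b + 2 ≤ a) :=
    (@List.isChain_iff_pairwise _ _ _ ⟨fun h h' => by omega⟩).1
      (Nat.isZeckendorfRep_zeckendorf n)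
  obtain ⟨hl, -, hl0⟩ := List.pairwise_append.1 hchain
  have two_le : ∀ a ∈ l, 2 ≤ a := fun a ha => by simpa using hl0 a ha 0 (by simp)
  have apart : ∀ a ∈ l, ∀ b ∈ l, a ≠ b → b + 2 ≤ a ∨ a + 2 ≤ b :=
    @List.Pairwise.forall _ _ _ ⟨fun _ _ => Or.symm⟩ (hl.imp Or.inl)
  have lt_of_mem : ∀ a ∈ l, a < n + 2 := fun a ha => by
    have : fib a ≤ n := Nat.sum_zeckendorf_fib n ▸ List.le_sum_of_mem (List.mem_map_of_mem ha)
    have := Nat.le_fib_add_one a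
    omega
  refine ⟨fun i => if i ∈ l then 1 else 0, ⟨fun i => ?_, fun i hi => ?_, fun i hi => ?_⟩,
    fun i hi => ?_, ?_⟩
  · split_ifs <;> omega
  · simp only [ite_eq_right_iff]
    intro h
    have := two_le i h
    omega
  · simp only [ite_eq_left_iff, ite_eq_right_iff] at hi ⊢
    intro hi'
    have := apart i (by_contra fun h => by simp [h] at hi) (i + 1) hi'
    omega
  · simp only [ite_eq_right_iff]
    intro h
    have := lt_of_mem i h
    omega
  · simp only [ite_mul, one_mul, zero_mul, ← sum_filter]
    have : (range (n + 2)).filter (· ∈ l) = l.toFinset := by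
      ext a
      simpa using lt_of_mem a
    rw [this, List.sum_toFinset _ (hl.imp fun h => by omega), Nat.sum_zeckendorf_fib]

section ZeckendorfDigits

variable {n N : ℕ}

theorem zeckDigit_spec (n : ℕ) :
    IsZeckendorfDigits (zeckDigit n) ∧ (∀ i, n + 2 ≤ i → zeckDigit n i = 0) ∧
      n = ∑ i ∈ range (n + 2), zeckDigit n i * fib i := by
  obtain ⟨e, he, hsupp, hsum⟩ := exists_isZeckendorfDigits n
  have h : ∃ e : ℕ → ℕ, (∀ i, e i ≤ 1) ∧ (∀ i, i < 2 → e i = 0) ∧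
      (∀ i, e i = 1 → e (i + 1) = 0) ∧ (∀ i, n + 2 ≤ i → e i = 0) ∧
      n = ∑ i ∈ range (n + 2), e i * fib i :=
    ⟨e, he.le_one, he.eq_zero_of_lt_two, he.succ_eq_zero, hsupp, hsum⟩
  rw [zeckDigit, dif_pos h]
  obtain ⟨h1, h2, h3, h4, h5⟩ := Classical.choose_spec h
  exact ⟨⟨h1, h2, h3⟩, h4, h5⟩

theorem isZeckendorfDigits_zeckDigit (n : ℕ) : IsZeckendorfDigits (zeckDigit n) :=
  (zeckDigit_spec n).1

theorem zeckDigit_eq_zero_of_le {i : ℕ} (hi : n + 2 ≤ i) : zeckDigit n i = 0 :=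
  (zeckDigit_spec n).2.1 i hi

theorem sum_zeckDigit_mul_fib (hN : ∀ i, N ≤ i → zeckDigit n i = 0) :
    ∑ i ∈ range N, zeckDigit n i * fib i = n := by
  have h := (zeckDigit_spec n).2.2
  rw [← eventually_constant_sum (fun i hi => by simp [zeckDigit_eq_zero_of_le hi])
    (Nat.le_add_left (n + 2) N)] at h
  rw [eventually_constant_sum (fun i hi => by simp [hN i hi]) (Nat.le_add_right N (n + 2))] at h
  exact h.symm

theorem sphi_eq_sum (hN : ∀ i, N ≤ i → zeckDigit n i = 0) :
    sphi n = ∑ i ∈ range N, zeckDigit n i := by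
  rw [sphi, ← eventually_constant_sum (fun i hi => zeckDigit_eq_zero_of_le hi)
    (Nat.le_add_left (n + 2) N), eventually_constant_sum hN (Nat.le_add_right N (n + 2))]

theorem zeckDigit_eq {e : ℕ → ℕ} (he : IsZeckendorfDigits e) (hN : ∀ i, N ≤ i → e i = 0)
    (hn : n = ∑ i ∈ range N, e i * fib i) : zeckDigit n = e := by
  funext i
  have hM {M : ℕ} (hM : N ≤ M) : ∑ j ∈ range M, e j * fib j = n := by
    rw [eventually_constant_sum (fun j hj => by simp [hN j hj]) hM, hn]
  refine (isZeckendorfDigits_zeckDigit n).eq_of_sum_range_eq he (N := N + n + 2 + i) ?_ i (by omega)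
  rw [hM (by omega), sum_zeckDigit_mul_fib fun j hj => zeckDigit_eq_zero_of_le (by omega)]

theorem fib_le_of_zeckDigit_eq_one {i : ℕ} (h : zeckDigit n i = 1) : fib i ≤ n := by
  have hi : i < n + 2 := by
    by_contra hi
    rw [zeckDigit_eq_zero_of_le (by omega)] at h
    exact zero_ne_one h
  calc fib i = zeckDigit n i * fib i := by rw [h, one_mul]
    _ ≤ ∑ j ∈ range (n + 2), zeckDigit n j * fib j :=
      single_le_sum (f := fun j => zeckDigit n j * fib j) (fun _ _ => Nat.zero_le _)
        (mem_range.2 hi)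
    _ = n := sum_zeckDigit_mul_fib fun j hj => zeckDigit_eq_zero_of_le hj

theorem zeckDigit_eq_zero_of_lt_fib {t : ℕ} (h : n < fib t) {i : ℕ} (hi : t ≤ i) :
    zeckDigit n i = 0 := by
  rcases (isZeckendorfDigits_zeckDigit n).eq_zero_or_eq_one i with h' | h'
  · exact h'
  · have := fib_le_of_zeckDigit_eq_one h'
    have := fib_mono hi
    omega

theorem lt_fib_of_zeckDigit_eq_zero {K : ℕ} (h : ∀ i, K ≤ i → zeckDigit n i = 0) :
    n < fib (K + 1) := by
  rw [← sum_zeckDigit_mul_fib (N := K + 1) fun i hi => h i (by omega)]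
  exact (isZeckendorfDigits_zeckDigit n).sum_range_lt_fib K

end ZeckendorfDigits

theorem zeckDigit_add_of_separated {x y t : ℕ} (hx : ∀ i, t ≤ i → zeckDigit x i = 0)
    (hy : ∀ i ≤ t, zeckDigit y i = 0) :
    zeckDigit (x + y) = zeckDigit x + zeckDigit y := by
  have dx := isZeckendorfDigits_zeckDigit x
  have dy := isZeckendorfDigits_zeckDigit y
  refine zeckDigit_eq (N := x + y + 2) ⟨fun i => ?_, fun i hi => ?_, fun i hi => ?_⟩
    (fun i hi => ?_) ?_
  · rcases lt_or_ge i t with h | h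
    · simpa [hy i h.le] using dx.le_one i
    · simpa [hx i h] using dy.le_one i
  · simp [dx.eq_zero_of_lt_two i hi, dy.eq_zero_of_lt_two i hi]
  · rcases lt_or_ge i t with h | h
    · simp only [Pi.add_apply, hy i h.le, add_zero] at hi ⊢
      simp [dx.succ_eq_zero i hi, hy (i + 1) h]
    · simp only [Pi.add_apply, hx i h, zero_add] at hi ⊢
      simp [dy.succ_eq_zero i hi, hx (i + 1) (by omega)]
  · simp [zeckDigit_eq_zero_of_le (n := x) (by omega : x + 2 ≤ i),
      zeckDigit_eq_zero_of_le (n := y) (by omega : y + 2 ≤ i)]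
  · simp only [Pi.add_apply, add_mul, sum_add_distrib]
    rw [sum_zeckDigit_mul_fib fun i hi => zeckDigit_eq_zero_of_le (by omega),
      sum_zeckDigit_mul_fib fun i hi => zeckDigit_eq_zero_of_le (by omega)]

theorem sphi_add_of_separated {x y t : ℕ} (hx : ∀ i, t ≤ i → zeckDigit x i = 0)
    (hy : ∀ i ≤ t, zeckDigit y i = 0) : sphi (x + y) = sphi x + sphi y := by
  rw [sphi, zeckDigit_add_of_separated hx hy, sphi_eq_sum (N := x + y + 2),
    sphi_eq_sum (N := x + y + 2)]
  · simp only [Pi.add_apply, sum_add_distrib]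
  all_goals exact fun i hi => zeckDigit_eq_zero_of_le (by omega)

theorem zeckDigit_zshift (n : ℕ) :
    zeckDigit (zshift n) = fun | 0 => 0 | i + 1 => zeckDigit n i := by
  have d := isZeckendorfDigits_zeckDigit n
  refine zeckDigit_eq (N := n + 3) ⟨?_, ?_, ?_⟩ ?_ ?_
  · rintro (_ | i)
    exacts [zero_le_one, d.le_one i]
  · rintro (_ | _ | i) hi
    exacts [rfl, d.eq_zero_of_lt_two 0 two_pos, absurd hi (by omega)]
  · rintro (_ | i) hi
    exacts [absurd hi zero_ne_one, d.succ_eq_zero i hi]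
  · rintro (_ | i) hi
    exacts [rfl, zeckDigit_eq_zero_of_le (by omega)]
  · rw [sum_range_succ', zshift]
    simp [mul_comm]

theorem sphi_zshift (n : ℕ) : sphi (zshift n) = sphi n := by
  have h := zeckDigit_zshift n
  have high : ∀ i, n + 3 ≤ i → zeckDigit (zshift n) i = 0 := by
    rw [h]
    rintro (_ | i) hi
    exacts [absurd hi (by omega), zeckDigit_eq_zero_of_le (by omega)]
  rw [sphi_eq_sum high, h, sum_range_succ', add_zero, sphi]

theorem sum_range_succ_mul_pow {R : Type*} [CommSemiring R] (a : ℕ → R) (x : R) (K : ℕ) :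
    ∑ i ∈ range (K + 1), a i * x ^ i = a 0 + x * ∑ i ∈ range K, a (i + 1) * x ^ i := by
  rw [sum_range_succ', mul_sum, add_comm]
  simp only [pow_succ, pow_zero, mul_one]
  congr 1
  exact sum_congr rfl fun i _ => by ring

section GoldenRatio

open Real goldenRatio

theorem abs_goldenConj : |ψ| = -ψ := abs_of_neg goldenConj_neg

theorem goldenRatio_mul_abs_goldenConj : φ * |ψ| = 1 := by
  rw [abs_goldenConj, mul_neg, goldenRatio_mul_goldenConj, neg_neg]

theorem abs_goldenConj_lt_one : |ψ| < 1 := by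
  rw [abs_goldenConj]
  linarith [neg_one_lt_goldenConj]

theorem one_add_abs_goldenConj : 1 + |ψ| = φ := by
  rw [abs_goldenConj]
  linarith [goldenRatio_add_goldenConj]

theorem one_sub_abs_goldenConj : 1 - |ψ| = ψ ^ 2 := by
  rw [abs_goldenConj, goldenConj_sq]
  ring

variable {e : ℕ → ℕ}

theorem abs_sum_mul_goldenConj_pow_le (h1 : ∀ i, e i ≤ 1)
    (h2 : ∀ i, e i = 1 → e (i + 1) = 0) (K : ℕ) :
    |∑ i ∈ range K, (e i : ℝ) * ψ ^ i| ≤ φ := by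
  induction K using Nat.twoStepInduction generalizing e with
  | zero => simp [goldenRatio_pos.le]
  | one =>
    rw [sum_range_one, pow_zero, mul_one, Nat.abs_cast]
    exact (Nat.cast_le_one.2 (h1 0)).trans one_lt_goldenRatio.le
  | more K ih ih' =>
    rw [sum_range_succ_mul_pow]
    rcases Nat.le_one_iff_eq_zero_or_eq_one.1 (h1 0) with h0 | h0
    · rw [h0, Nat.cast_zero, zero_add, abs_mul]
      calc _ ≤ |ψ| * φ := by
            gcongr
            exact ih' (fun i => h1 (i + 1)) (fun i => h2 (i + 1))
        _ = 1 := by rw [mul_comm, goldenRatio_mul_abs_goldenConj]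
        _ ≤ φ := one_lt_goldenRatio.le
    · rw [sum_range_succ_mul_pow, h2 0 h0, h0, Nat.cast_one, Nat.cast_zero, zero_add,
        ← mul_assoc, ← sq]
      calc _ ≤ |(1 : ℝ)| + |ψ ^ 2 * _| := abs_add_le _ _
        _ ≤ 1 + |ψ| * (|ψ| * φ) := by
          rw [abs_one, abs_mul, abs_pow, sq, mul_assoc]
          gcongr
          exact ih (fun i => h1 (i + 2)) (fun i => h2 (i + 2))
        _ = φ := by
          rw [mul_comm _ φ, goldenRatio_mul_abs_goldenConj, mul_one, one_add_abs_goldenConj]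

theorem abs_sum_mul_goldenConj_pow_le_one (h1 : ∀ i, e i ≤ 1)
    (h2 : ∀ i, e i = 1 → e (i + 1) = 0) (h0 : e 0 = 0) :
    ∀ K, |∑ i ∈ range K, (e i : ℝ) * ψ ^ i| ≤ 1
  | 0 => by simp
  | K + 1 => by
    rw [sum_range_succ_mul_pow, h0, Nat.cast_zero, zero_add, abs_mul,
      ← goldenRatio_mul_abs_goldenConj, mul_comm φ]
    exact mul_le_mul_of_nonneg_left
      (abs_sum_mul_goldenConj_pow_le (e := fun i => e (i + 1)) (fun i => h1 _) (fun i => h2 _) K)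
      (abs_nonneg ψ)

theorem sq_goldenConj_le_abs_sum (h1 : ∀ i, e i ≤ 1) (h2 : ∀ i, e i = 1 → e (i + 1) = 0)
    (h0 : e 0 = 1) (K : ℕ) : ψ ^ 2 ≤ |∑ i ∈ range (K + 1), (e i : ℝ) * ψ ^ i| := by
  have tail := abs_sum_mul_goldenConj_pow_le_one (e := fun i => e (i + 1)) (fun i => h1 _)
    (fun i => h2 _) (h2 0 h0) K
  rw [sum_range_succ_mul_pow, h0, Nat.cast_one, ← one_sub_abs_goldenConj]
  have : |ψ * ∑ i ∈ range K, (e (i + 1) : ℝ) * ψ ^ i| ≤ |ψ| := by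
    rw [abs_mul]
    exact mul_le_of_le_one_right (abs_nonneg ψ) tail
  have := abs_sub_abs_le_abs_add (1 : ℝ) (ψ * ∑ i ∈ range K, (e (i + 1) : ℝ) * ψ ^ i)
  rw [abs_one] at this
  linarith

variable {n m : ℕ}

theorem zshift_sub_goldenRatio_mul (n : ℕ) :
    (zshift n : ℝ) - φ * n = ∑ i ∈ range (n + 2), (zeckDigit n i : ℝ) * ψ ^ i := by
  have hn : (n : ℝ) = ∑ i ∈ range (n + 2), (zeckDigit n i : ℝ) * fib i := by
    exact_mod_cast (sum_zeckDigit_mul_fib fun i hi => zeckDigit_eq_zero_of_le hi).symm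
  rw [hn, zshift]
  push_cast
  rw [mul_sum, ← sum_sub_distrib]
  refine sum_congr rfl fun i _ => ?_
  rw [← fib_succ_sub_goldenRatio_mul_fib]
  ring

theorem zshift_sub_goldenRatio_mul_eq (hm : ∀ i < m, zeckDigit n i = 0) :
    (zshift n : ℝ) - φ * n =
      ψ ^ m * ∑ i ∈ range (n + 2), (zeckDigit n (m + i) : ℝ) * ψ ^ i := by
  rw [zshift_sub_goldenRatio_mul, ← eventually_constant_sum (n := m + (n + 2))
    (fun i hi => by simp [zeckDigit_eq_zero_of_le hi]) (Nat.le_add_left _ _), sum_range_add,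
    sum_eq_zero fun i hi => by simp [hm i (mem_range.1 hi)], zero_add, mul_sum]
  exact sum_congr rfl fun i _ => by ring

theorem abs_zshift_sub_goldenRatio_mul_le (hm : ∀ i < m, zeckDigit n i = 0) :
    |(zshift n : ℝ) - φ * n| ≤ φ * |ψ| ^ m := by
  have d := isZeckendorfDigits_zeckDigit n
  rw [zshift_sub_goldenRatio_mul_eq hm, abs_mul, abs_pow, mul_comm]
  gcongr
  exact abs_sum_mul_goldenConj_pow_le (fun i => d.le_one (m + i))
    (fun i => d.succ_eq_zero (m + i)) _

theorem le_abs_zshift_sub_goldenRatio_mul (hm : ∀ i < m, zeckDigit n i = 0)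
    (hm1 : zeckDigit n m = 1) : ψ ^ 2 * |ψ| ^ m ≤ |(zshift n : ℝ) - φ * n| := by
  have d := isZeckendorfDigits_zeckDigit n
  rw [zshift_sub_goldenRatio_mul_eq hm, abs_mul, abs_pow, mul_comm]
  gcongr
  exact sq_goldenConj_le_abs_sum (e := fun i => zeckDigit n (m + i)) (fun i => d.le_one (m + i))
    (fun i => d.succ_eq_zero (m + i)) hm1 (n + 1)

theorem one_le_abs_natCast_sub_natCast {a b : ℕ} (h : a ≠ b) :
    (1 : ℝ) ≤ |(a : ℝ) - b| := by
  exact_mod_cast Int.one_le_abs (sub_ne_zero.2 (Int.natCast_inj.not.2 h))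

theorem le_abs_goldenRatio_mul_sub (hm : ∀ i < m, zeckDigit n i = 0)
    (hm1 : zeckDigit n m = 1) (M : ℕ) : ψ ^ 2 * |ψ| ^ m ≤ |φ * n - M| := by
  by_cases hM : zshift n = M
  · rw [← hM, abs_sub_comm]
    exact le_abs_zshift_sub_goldenRatio_mul hm hm1
  have two_le : 2 ≤ m := by
    by_contra h
    rw [(isZeckendorfDigits_zeckDigit n).eq_zero_of_lt_two m (by omega)] at hm1
    exact zero_ne_one hm1
  have hψ : |ψ| ^ m ≤ |ψ| ^ 2 :=
    pow_le_pow_of_le_one (abs_nonneg ψ) abs_goldenConj_lt_one.le two_le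
  have hfar := one_le_abs_natCast_sub_natCast hM
  have hnear := (abs_zshift_sub_goldenRatio_mul_le hm).trans
    (mul_le_mul_of_nonneg_left hψ goldenRatio_pos.le)
  have := abs_sub_abs_le_abs_sub ((zshift n : ℝ) - M) ((zshift n : ℝ) - φ * n)
  rw [sub_sub_sub_cancel_left] at this
  calc ψ ^ 2 * |ψ| ^ m ≤ ψ ^ 2 * 1 := by
        gcongr
        exact pow_le_one₀ (abs_nonneg ψ) abs_goldenConj_lt_one.le
    _ = 1 - φ * |ψ| ^ 2 := by
        rw [mul_one, ← one_sub_abs_goldenConj, sq, ← mul_assoc, goldenRatio_mul_abs_goldenConj,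
          one_mul]
    _ ≤ |φ * n - M| := by linarith

theorem natCast_lt_goldenRatio_pow (c : ℕ) : (c : ℝ) < φ ^ (2 * c) := by
  have h2 : (2 : ℝ) < φ ^ 2 := by rw [goldenRatio_sq]; linarith [one_lt_goldenRatio]
  calc (c : ℝ) < 2 ^ c := by exact_mod_cast Nat.lt_two_pow_self
    _ ≤ (φ ^ 2) ^ c := by gcongr
    _ = φ ^ (2 * c) := (pow_mul φ 2 c).symm


theorem natCast_mul_goldenRatio_mul_pow_lt {c j : ℕ} (hm : j + 2 * c + 3 ≤ m) :
    c * (φ * |ψ| ^ m) < ψ ^ 2 * |ψ| ^ j := by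
  have hψ : 0 < |ψ| := abs_pos.2 goldenConj_neg.ne
  have hc : c * |ψ| ^ (2 * c) < 1 := by
    calc c * |ψ| ^ (2 * c) < φ ^ (2 * c) * |ψ| ^ (2 * c) := by
          gcongr
          exact natCast_lt_goldenRatio_pow c
      _ = 1 := by rw [← mul_pow, goldenRatio_mul_abs_goldenConj, one_pow]
  calc c * (φ * |ψ| ^ m) ≤ c * (φ * |ψ| ^ (j + 2 * c + 3)) :=
        mul_le_mul_of_nonneg_left (mul_le_mul_of_nonneg_left
          (pow_le_pow_of_le_one hψ.le abs_goldenConj_lt_one.le hm) goldenRatio_pos.le)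
          c.cast_nonneg
    _ = (c * |ψ| ^ (2 * c)) * (|ψ| ^ 2 * |ψ| ^ j) := by
        rw [show j + 2 * c + 3 = (2 * c + 2 + j) + 1 by ring, pow_succ, mul_comm _ |ψ|,
          ← mul_assoc φ, goldenRatio_mul_abs_goldenConj, one_mul, pow_add, pow_add]
        ring
    _ < ψ ^ 2 * |ψ| ^ j := by
        rw [← sq_abs ψ]
        exact mul_lt_of_lt_one_left (mul_pos (pow_pos hψ 2) (pow_pos hψ j)) hc

theorem abs_goldenRatio_mul_mul_sub (c x : ℕ) :
    |φ * ((c * x : ℕ) : ℝ) - ((c * zshift x : ℕ) : ℝ)| = c * |(zshift x : ℝ) - φ * x| := by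
  rw [← Nat.abs_cast c, ← abs_mul, ← abs_neg]
  push_cast
  ring_nf

theorem zeckDigit_mul_eq_zero_of_lt (c : ℕ) {x : ℕ} (hx : ∀ i < m, zeckDigit x i = 0)
    {i : ℕ} (hi : i + 2 * c + 3 ≤ m) : zeckDigit (c * x) i = 0 := by
  classical
  by_contra hne
  have hex : ∃ j, zeckDigit (c * x) j ≠ 0 := ⟨i, hne⟩
  have hj1 : zeckDigit (c * x) (Nat.find hex) = 1 :=
    ((isZeckendorfDigits_zeckDigit _).eq_zero_or_eq_one _).resolve_left (Nat.find_spec hex)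
  have hjlow : ∀ j < Nat.find hex, zeckDigit (c * x) j = 0 :=
    fun j hj => not_not.1 (Nat.find_min hex hj)
  have hji : Nat.find hex ≤ i := Nat.find_min' hex hne
  have lower := le_abs_goldenRatio_mul_sub hjlow hj1 (c * zshift x)
  rw [abs_goldenRatio_mul_mul_sub] at lower
  have upper := mul_le_mul_of_nonneg_left (abs_zshift_sub_goldenRatio_mul_le hx) c.cast_nonneg
  have := natCast_mul_goldenRatio_mul_pow_lt (c := c) (j := Nat.find hex) (m := m) (by omega)
  linarith

theorem zshift_mul (c : ℕ) {x : ℕ} (hx : ∀ i < 2 * c + 3, zeckDigit x i = 0) :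
    zshift (c * x) = c * zshift x := by
  by_contra hne
  have hfar := one_le_abs_natCast_sub_natCast hne
  have htri := abs_sub_le ((zshift (c * x) : ℝ)) (φ * (c * x : ℕ)) ((c * zshift x : ℕ) : ℝ)
  rw [abs_goldenRatio_mul_mul_sub] at htri
  have near_cx := abs_zshift_sub_goldenRatio_mul_le (n := c * x)
    (isZeckendorfDigits_zeckDigit (c * x)).eq_zero_of_lt_two
  have near_x := mul_le_mul_of_nonneg_left (abs_zshift_sub_goldenRatio_mul_le hx) c.cast_nonneg
  have small := natCast_mul_goldenRatio_mul_pow_lt (c := c) (j := 0) (m := 2 * c + 3) (by omega)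
  rw [pow_zero, mul_one] at small
  have hφψ : φ * |ψ| ^ 2 = |ψ| := by
    rw [sq, ← mul_assoc, goldenRatio_mul_abs_goldenConj, one_mul]
  linarith [one_sub_abs_goldenConj]

end GoldenRatio

theorem mul_lt_fib_add_two_mul {x K : ℕ} (hx : x < fib K) : ∀ c, c * x < fib (K + 2 * c)
  | 0 => by simpa using (Nat.zero_le x).trans_lt hx
  | c + 1 => by
    have ih := mul_lt_fib_add_two_mul hx c
    have hfib : fib (K + 2 * (c + 1)) = fib (K + 2 * c) + fib (K + 2 * c + 1) := by
      rw [show K + 2 * (c + 1) = K + 2 * c + 2 by ring, fib_add_two]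
    have := fib_mono (show K ≤ K + 2 * c + 1 by omega)
    rw [add_mul, one_mul, hfib]
    omega

theorem zeckDigit_mul_eq_zero_of_le (c : ℕ) {x K : ℕ}
    (hx : ∀ i, K ≤ i → zeckDigit x i = 0) {i : ℕ} (hi : K + 1 + 2 * c ≤ i) :
    zeckDigit (c * x) i = 0 :=
  zeckDigit_eq_zero_of_lt_fib (mul_lt_fib_add_two_mul (lt_fib_of_zeckDigit_eq_zero hx) c) hi

theorem RSep.mono {r r' k n1 n2 : ℕ} (hr : r ≤ r') (h : RSep r' k n1 n2) : RSep r k n1 n2 :=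
  ⟨fun i hi => h.1 i (by omega), fun i hi => h.2 i (by omega)⟩

theorem zeckDigit_eq_zero_of_zv_eq_zero {n r : ℕ} (h : zv n r = 0) : ∀ i < r, zeckDigit n i = 0
  | 0, _ => (isZeckendorfDigits_zeckDigit n).eq_zero_of_lt_two 0 two_pos
  | i + 1, hi => by
    have := sum_eq_zero_iff.1 h (i + 1) (mem_range.2 hi)
    simpa [Nat.fib_pos.2 i.succ_pos |>.ne'] using this

theorem zv_eq_zero_of_le {n r r' : ℕ} (hr : r ≤ r') (h : zv n r' = 0) : zv n r = 0 :=
  sum_eq_zero fun i hi => sum_eq_zero_iff.1 h i (range_subset_range.2 hr hi)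

namespace QuasiAdd

variable {r : ℕ} {g h : ℕ → ℕ}

theorem mono {r' : ℕ} (hr : r ≤ r') (hg : QuasiAdd r g) : QuasiAdd r' g :=
  ⟨fun n1 n2 k hs => hg.1 n1 n2 k (hs.mono hr), fun n hz => hg.2 n (zv_eq_zero_of_le hr hz)⟩

theorem add (hg : QuasiAdd r g) (hh : QuasiAdd r h) : QuasiAdd r fun n => g n + h n :=
  ⟨fun n1 n2 k hs => by dsimp only; rw [hg.1 n1 n2 k hs, hh.1 n1 n2 k hs]; ring,
    fun n hz => by dsimp only; rw [hg.2 n hz, hh.2 n hz]⟩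

end QuasiAdd

theorem quasiAdd_sphi_mul (c : ℕ) : QuasiAdd (4 * c + 3) fun n => sphi (c * n) := by
  refine ⟨fun n1 n2 k ⟨h1, h2⟩ => ?_, fun n hz => ?_⟩
  · dsimp only
    rw [mul_add]
    exact sphi_add_of_separated (t := k - (4 * c + 3) + 1 + 2 * c)
      (fun i hi => zeckDigit_mul_eq_zero_of_le c h1 hi)
      fun i hi => zeckDigit_mul_eq_zero_of_lt c (m := k + (4 * c + 3) + 1)
        (fun j hj => h2 j (by omega)) (by omega)
  · dsimp only
    rw [← zshift_mul c fun i hi => zeckDigit_eq_zero_of_zv_eq_zero hz i (by omega), sphi_zshift]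

theorem quasi_additivity_of_correlation_general (p q : ℕ) :
    ∃ r : ℕ,
      (∀ n1 n2 k : ℕ, 0 < n1 → 0 < n2 → RSep r k n1 n2 →
        sphi (p * (n1 + n2)) + sphi (q * (n1 + n2)) =
          (sphi (p * n1) + sphi (q * n1)) + (sphi (p * n2) + sphi (q * n2))) ∧
      (∀ n : ℕ, 0 < n → zv n r = 0 →
        sphi (p * n) + sphi (q * n) = sphi (p * zshift n) + sphi (q * zshift n)) := by
  obtain ⟨hadd, hshift⟩ := ((quasiAdd_sphi_mul p).mono (le_max_left _ (4 * q + 3))).add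
    ((quasiAdd_sphi_mul q).mono (le_max_right (4 * p + 3) _))
  exact ⟨_, fun n1 n2 k _ _ hs => hadd n1 n2 k hs, fun n _ hz => hshift n hz⟩

/-- For integers `q > p ≥ 2`, the function `f(n) = s_φ(pn) + s_φ(qn)` is
quasi-additive with respect to the Zeckendorf expansion: there is `r ≥ 0` such
that `f(n1+n2) = f(n1) + f(n2)` for all positive `n1, n2` that are
`r`-separated at some position `k`, and `f(n) = f(S(n))` whenever `v(n,r) = 0`. -/
theorem quasi_additivity_of_correlation (p q : ℕ) (hp : 2 ≤ p) (hpq : p < q) :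
    ∃ r : ℕ,
      (∀ n1 n2 k : ℕ, 0 < n1 → 0 < n2 → RSep r k n1 n2 →
        sphi (p * (n1 + n2)) + sphi (q * (n1 + n2)) =
          (sphi (p * n1) + sphi (q * n1)) + (sphi (p * n2) + sphi (q * n2))) ∧
      (∀ n : ℕ, 0 < n → zv n r = 0 →
        sphi (p * n) + sphi (q * n) = sphi (p * zshift n) + sphi (q * zshift n)) :=
  quasi_additivity_of_correlation_general p q
end

section
/- Let q > p ≥ 2 be integers, f(n) = s_φ(pn) + s_φ(qn), and let r ≥ 2 be such that f is r-quasi-additive and such that there exist n', n'' ∈ 𝓑 with f(n') even and f(n'') odd. Then there exists a real number x_1 > 1/φ such that x + x^{r+1}·B(x,−1) ≠ 1 for all complex numbers x with |x| ≤ x_1, where B(x,−1) = Σ_{n∈𝓑} (−1)^{f(n)} x^{ℓ(n)}. -/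
/-- `𝓑'`: positive integers with no decomposition into two positive
`r`-separated parts. -/
def BsetAux (r : ℕ) : Set ℕ :=
  {n | 0 < n ∧ ¬ ∃ n1 n2 k, 0 < n1 ∧ 0 < n2 ∧ n = n1 + n2 ∧ RSep r k n1 n2}

/-- `𝓑 = {n ∈ 𝓑' : v(n, r+1) = F_r}`. -/
def Bset (r : ℕ) : Set ℕ := {n ∈ BsetAux r | zv n (r + 1) = Nat.fib r}

/-- `ℓ(n)`: the unique `k` with `F_{k-1} ≤ n < F_k` (for `n ≥ 1`). -/
noncomputable def zell (n : ℕ) : ℕ := sInf {k | n < Nat.fib k}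

/-!
Every `n ∈ 𝓑` has its lowest Zeckendorf digit at `r`, and deleting its leading Fibonacci number
gives again an element of `𝓑` whose `ℓ` is smaller by a gap `g ∈ [2, 2r+1]`: a larger gap would
split `n` into two `r`-separated parts. Hence
`∑_{n ∈ 𝓑} t^{ℓ(n)} ≤ t^{r+1} / (1 - ∑_{g=2}^{2r+1} t^g)`.
At `t = 1/φ` the gap sum equals `1 - t^{2r}`, so `|x^{r+1} B(x,-1)| ≤ 1 - 1/φ` for `|x| ≤ 1/φ`.
Then `x + x^{r+1} B(x,-1) = 1` forces `x = 1/φ`, where the term of the odd element makes the real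
number `B(1/φ,-1)` strictly smaller than its majorant. Continuity and compactness of the closed
disc then give some room beyond `1/φ`.
-/

open Finset

structure IsGapDescent {α : Type*} (A : Set α) (ℓ : α → ℕ) (ρ : α → α) (a₀ : α)
    (G : Finset ℕ) : Prop where
  mapsTo : ∀ a ∈ A, a ≠ a₀ → ρ a ∈ A
  lt : ∀ a ∈ A, a ≠ a₀ → ℓ (ρ a) < ℓ a
  sub_mem : ∀ a ∈ A, a ≠ a₀ → ℓ a - ℓ (ρ a) ∈ G
  injOn : ∀ a ∈ A, ∀ b ∈ A, a ≠ a₀ → b ≠ a₀ → ρ a = ρ b → ℓ a = ℓ b → a = b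

namespace IsGapDescent

variable {α : Type*} {A : Set α} {ℓ : α → ℕ} {ρ : α → α} {a₀ : α} {G : Finset ℕ} {t : ℝ}

-- Induction step of `sum_pow_le`: the elements at gap `g` contribute `t ^ g` times the sum over
-- their parents, which are distinct and have smaller `ℓ`.
theorem sum_filter_gap_pow_le [DecidableEq α] (hD : IsGapDescent A ℓ ρ a₀ G) (ht : 0 ≤ t)
    {K : ℕ} {C : ℝ}
    (ih : ∀ u : Finset α, ↑u ⊆ A → (∀ a ∈ u, ℓ a < K) → ∑ a ∈ u, t ^ ℓ a ≤ C)
    {u : Finset α} (hu : ↑u ⊆ A) (hK : ∀ a ∈ u, ℓ a < K + 1) (g : ℕ) :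
    ∑ a ∈ (u.filter (· ≠ a₀)).filter (fun a => ℓ a - ℓ (ρ a) = g), t ^ ℓ a ≤ t ^ g * C := by
  set v := (u.filter (· ≠ a₀)).filter (fun a => ℓ a - ℓ (ρ a) = g)
  have hv : ∀ a ∈ v, a ∈ A ∧ a ≠ a₀ ∧ ℓ a = g + ℓ (ρ a) ∧ ℓ a < K + 1 := by
    intro a ha
    simp only [v, mem_filter] at ha
    have := hD.lt a (hu ha.1.1) ha.1.2
    exact ⟨hu ha.1.1, ha.1.2, by omega, hK a ha.1.1⟩
  calc ∑ a ∈ v, t ^ ℓ a = t ^ g * ∑ a ∈ v, t ^ ℓ (ρ a) := by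
        rw [mul_sum]
        exact sum_congr rfl fun a ha => by rw [(hv a ha).2.2.1, pow_add]
    _ = t ^ g * ∑ b ∈ v.image ρ, t ^ ℓ b := by
        rw [sum_image fun a ha b hb hab => hD.injOn a (hv a ha).1 b (hv b hb).1
          (hv a ha).2.1 (hv b hb).2.1 hab (by rw [(hv a ha).2.2.1, (hv b hb).2.2.1, hab])]
    _ ≤ t ^ g * C := by
        refine mul_le_mul_of_nonneg_left (ih _ ?_ ?_) (pow_nonneg ht g)
        · intro b hb
          obtain ⟨a, ha, rfl⟩ := mem_image.1 hb
          exact hD.mapsTo a (hv a ha).1 (hv a ha).2.1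
        · intro b hb
          obtain ⟨a, ha, rfl⟩ := mem_image.1 hb
          have := hD.lt a (hv a ha).1 (hv a ha).2.1
          have := (hv a ha).2.2.2
          omega

theorem sum_pow_le (hD : IsGapDescent A ℓ ρ a₀ G) (ht : 0 ≤ t) (hG : ∑ g ∈ G, t ^ g < 1)
    (u : Finset α) (hu : ↑u ⊆ A) : ∑ a ∈ u, t ^ ℓ a ≤ t ^ ℓ a₀ / (1 - ∑ g ∈ G, t ^ g) := by
  classical
  set σ := ∑ g ∈ G, t ^ g
  set C := t ^ ℓ a₀ / (1 - σ) with hCdef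
  have hC : t ^ ℓ a₀ + σ * C = C := by
    have : 1 - σ ≠ 0 := by linarith
    rw [hCdef]
    field_simp
    ring
  suffices key : ∀ K, ∀ u : Finset α, ↑u ⊆ A → (∀ a ∈ u, ℓ a < K) → ∑ a ∈ u, t ^ ℓ a ≤ C from
    key _ u hu fun a ha => Nat.lt_succ_of_le (le_sup (f := ℓ) ha)
  intro K
  induction K with
  | zero =>
    intro u _ hK
    rw [eq_empty_of_forall_notMem fun a ha => (hK a ha).not_ge (Nat.zero_le _), sum_empty]
    exact div_nonneg (pow_nonneg ht _) (by linarith)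
  | succ K ih =>
    intro u hu hK
    have hroot : ∑ a ∈ u.filter (· = a₀), t ^ ℓ a ≤ t ^ ℓ a₀ :=
      (sum_le_sum_of_subset_of_nonneg (t := {a₀}) (fun a ha => mem_singleton.2 (mem_filter.1 ha).2)
        fun _ _ _ => pow_nonneg ht _).trans_eq (sum_singleton _ _)
    have hmaps : ∀ a ∈ u.filter (· ≠ a₀), ℓ a - ℓ (ρ a) ∈ G := fun a ha =>
      hD.sub_mem a (hu (mem_filter.1 ha).1) (mem_filter.1 ha).2
    calc ∑ a ∈ u, t ^ ℓ a
        = ∑ a ∈ u.filter (· = a₀), t ^ ℓ a + ∑ g ∈ G,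
            ∑ a ∈ (u.filter (· ≠ a₀)).filter (fun a => ℓ a - ℓ (ρ a) = g), t ^ ℓ a := by
          rw [sum_fiberwise_of_maps_to hmaps, sum_filter_add_sum_filter_not]
      _ ≤ t ^ ℓ a₀ + ∑ g ∈ G, t ^ g * C :=
          add_le_add hroot (sum_le_sum fun g _ => hD.sum_filter_gap_pow_le ht ih hu hK g)
      _ = C := by rw [← sum_mul, hC]

theorem sum_subtype_pow_le (hD : IsGapDescent A ℓ ρ a₀ G) (ht : 0 ≤ t)
    (hG : ∑ g ∈ G, t ^ g < 1) (v : Finset A) :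
    ∑ a ∈ v, t ^ ℓ a ≤ t ^ ℓ a₀ / (1 - ∑ g ∈ G, t ^ g) := by
  simpa using hD.sum_pow_le ht hG (v.map (Function.Embedding.subtype _)) (by simp)

theorem summable_pow (hD : IsGapDescent A ℓ ρ a₀ G) (ht : 0 ≤ t) (hG : ∑ g ∈ G, t ^ g < 1) :
    Summable fun a : A => t ^ ℓ a :=
  summable_of_sum_le (fun _ => pow_nonneg ht _) (hD.sum_subtype_pow_le ht hG)

theorem tsum_pow_le (hD : IsGapDescent A ℓ ρ a₀ G) (ht : 0 ≤ t) (hG : ∑ g ∈ G, t ^ g < 1) :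
    ∑' a : A, t ^ ℓ a ≤ t ^ ℓ a₀ / (1 - ∑ g ∈ G, t ^ g) :=
  Real.tsum_le_of_sum_le (fun _ => pow_nonneg ht _) (hD.sum_subtype_pow_le ht hG)

end IsGapDescent

section Zeckendorf

open Nat

def IsZeckSupport (P : Finset ℕ) : Prop :=
  (∀ i ∈ P, 2 ≤ i) ∧ ∀ i ∈ P, ∀ j ∈ P, i < j → i + 2 ≤ j

lemma IsZeckSupport.mono {P Q : Finset ℕ} (hP : IsZeckSupport P) (hQ : Q ⊆ P) :
    IsZeckSupport Q :=
  ⟨fun i hi => hP.1 i (hQ hi), fun i hi j hj => hP.2 i (hQ hi) j (hQ hj)⟩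

lemma List.isZeckendorfRep_iff {l : List ℕ} :
    l.IsZeckendorfRep ↔ l.Pairwise (fun a b => b + 2 ≤ a) ∧ ∀ a ∈ l, 2 ≤ a := by
  have : Trans (fun a b : ℕ => b + 2 ≤ a) (fun a b => b + 2 ≤ a) (fun a b => b + 2 ≤ a) :=
    ⟨fun h₁ h₂ => by omega⟩
  simp [List.IsZeckendorfRep, List.isChain_iff_pairwise, List.pairwise_append]

lemma List.IsZeckendorfRep.nodup {l : List ℕ} (hl : l.IsZeckendorfRep) : l.Nodup :=
  (isZeckendorfRep_iff.1 hl).1.imp fun h => by omega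

lemma List.IsZeckendorfRep.isZeckSupport_toFinset {l : List ℕ} (hl : l.IsZeckendorfRep) :
    IsZeckSupport l.toFinset := by
  obtain ⟨hpw, hge⟩ := isZeckendorfRep_iff.1 hl
  have : Std.Symm (fun a b : ℕ => b + 2 ≤ a ∨ a + 2 ≤ b) := ⟨fun _ _ h => h.symm⟩
  refine ⟨fun i hi => hge i (List.mem_toFinset.1 hi), fun i hi j hj hij => ?_⟩
  have := (hpw.imp (S := fun a b : ℕ => b + 2 ≤ a ∨ a + 2 ≤ b) Or.inl).forall
    (List.mem_toFinset.1 hi) (List.mem_toFinset.1 hj) hij.ne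
  omega

lemma IsZeckSupport.isZeckendorfRep_sort {P : Finset ℕ} (hP : IsZeckSupport P) :
    (P.sort (· ≥ ·)).IsZeckendorfRep := by
  refine List.isZeckendorfRep_iff.2
    ⟨((P.pairwise_sort _).and (P.sort_nodup _)).imp_of_mem fun ha hb hab => ?_,
      fun a ha => hP.1 a ((P.mem_sort _).1 ha)⟩
  exact hP.2 _ ((P.mem_sort _).1 hb) _ ((P.mem_sort _).1 ha) (lt_of_le_of_ne hab.1 hab.2.symm)

noncomputable def zeckSupport (n : ℕ) : Finset ℕ := n.zeckendorf.toFinset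

lemma isZeckSupport_zeckSupport (n : ℕ) : IsZeckSupport (zeckSupport n) :=
  (isZeckendorfRep_zeckendorf n).isZeckSupport_toFinset

lemma sum_zeckSupport (n : ℕ) : ∑ i ∈ zeckSupport n, fib i = n := by
  rw [zeckSupport, List.sum_toFinset _ (isZeckendorfRep_zeckendorf n).nodup,
    sum_zeckendorf_fib]

lemma zeckSupport_sum_fib {P : Finset ℕ} (hP : IsZeckSupport P) :
    zeckSupport (∑ i ∈ P, fib i) = P := by
  have hsum : ∑ i ∈ P, fib i = ((P.sort (· ≥ ·)).map fib).sum := by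
    rw [← List.sum_toFinset _ (P.sort_nodup _), sort_toFinset]
  rw [hsum, zeckSupport, zeckendorf_sum_fib hP.isZeckendorfRep_sort, sort_toFinset]

lemma fib_le_of_mem_zeckSupport {n i : ℕ} (hi : i ∈ zeckSupport n) : fib i ≤ n :=
  sum_zeckSupport n ▸ single_le_sum (fun _ _ => Nat.zero_le _) hi

lemma le_greatestFib_of_mem_zeckSupport {n i : ℕ} (hi : i ∈ zeckSupport n) :
    i ≤ n.greatestFib :=
  le_greatestFib.2 (fib_le_of_mem_zeckSupport hi)

lemma zeckSupport_subset_range (n : ℕ) : zeckSupport n ⊆ range (n + 2) := fun i hi =>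
  mem_range.2 (by have := le_fib_add_one i; have := fib_le_of_mem_zeckSupport hi; omega)

lemma zeckSupport_eq_empty_iff {n : ℕ} : zeckSupport n = ∅ ↔ n = 0 := by
  refine ⟨fun h => ?_, fun h => by simp [h, zeckSupport]⟩
  rw [← sum_zeckSupport n, h, sum_empty]

-- The property of which `zeckDigit n` is a chosen witness.
def IsZeckDigits (n : ℕ) (e : ℕ → ℕ) : Prop :=
  (∀ i, e i ≤ 1) ∧ (∀ i, i < 2 → e i = 0) ∧ (∀ i, e i = 1 → e (i + 1) = 0) ∧
    (∀ i, n + 2 ≤ i → e i = 0) ∧ n = ∑ i ∈ range (n + 2), e i * fib i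

lemma isZeckDigits_ite (n : ℕ) :
    IsZeckDigits n fun i => if i ∈ zeckSupport n then 1 else 0 := by
  have hS := isZeckSupport_zeckSupport n
  unfold IsZeckDigits
  beta_reduce
  refine ⟨fun i => ?_, fun i hi => ?_, fun i hi => ?_, fun i hi => ?_, ?_⟩
  · split_ifs <;> omega
  · rw [if_neg fun hmem => by have := hS.1 i hmem; omega]
  · have hi' : i ∈ zeckSupport n := by by_contra hc; simp [hc] at hi
    rw [if_neg fun hmem => by have := hS.2 i hi' (i + 1) hmem (by omega); omega]
  · rw [if_neg fun hmem => by have := mem_range.1 (zeckSupport_subset_range n hmem); omega]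
  · simp_rw [ite_mul, one_mul, zero_mul]
    rw [sum_ite_mem, inter_eq_right.2 (zeckSupport_subset_range n), sum_zeckSupport]

lemma IsZeckDigits.eq_ite {n : ℕ} {e : ℕ → ℕ} (he : IsZeckDigits n e) :
    e = fun i => if i ∈ zeckSupport n then 1 else 0 := by
  obtain ⟨h1, h2, h3, h4, h5⟩ := he
  set P := (range (n + 2)).filter (e · = 1)
  have hP : IsZeckSupport P := by
    refine ⟨fun i hi => ?_, fun i hi j hj hij => ?_⟩
    · by_contra hlt
      have := (mem_filter.1 hi).2
      rw [h2 i (by omega)] at this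
      exact zero_ne_one this
    · have hj1 := (mem_filter.1 hj).2
      by_contra hlt
      rw [show j = i + 1 by omega, h3 i (mem_filter.1 hi).2] at hj1
      exact zero_ne_one hj1
  have hsum : ∑ i ∈ P, fib i = n := by
    rw [sum_filter]
    conv_rhs => rw [h5]
    refine sum_congr rfl fun i _ => ?_
    rcases Nat.le_one_iff_eq_zero_or_eq_one.1 (h1 i) with he | he <;> simp [he]
  have hsupp : zeckSupport n = P := hsum ▸ zeckSupport_sum_fib hP
  funext i
  simp only [hsupp, P, mem_filter, mem_range]
  by_cases hi : i < n + 2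
  · rcases Nat.le_one_iff_eq_zero_or_eq_one.1 (h1 i) with he | he <;> simp [he, hi]
  · simp [hi, h4 i (by omega)]

lemma zeckDigit_eq_ite (n : ℕ) :
    zeckDigit n = fun i => if i ∈ zeckSupport n then 1 else 0 := by
  rw [zeckDigit]
  split_ifs with h
  · exact IsZeckDigits.eq_ite (Classical.choose_spec h)
  · exact (h ⟨_, isZeckDigits_ite n⟩).elim

lemma zeckDigit_eq_zero_iff {n i : ℕ} : zeckDigit n i = 0 ↔ i ∉ zeckSupport n := by
  simp [zeckDigit_eq_ite]

lemma rsep_iff {r k n₁ n₂ : ℕ} : RSep r k n₁ n₂ ↔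
    (∀ i ∈ zeckSupport n₁, i + r < k) ∧ ∀ i ∈ zeckSupport n₂, k + r < i := by
  simp only [RSep, zeckDigit_eq_zero_iff]
  refine and_congr ⟨fun h i hi => ?_, fun h i hi hmem => ?_⟩
    ⟨fun h i hi => ?_, fun h i hi hmem => ?_⟩
  · by_contra! hle; exact h i (by omega) hi
  · have := h i hmem; omega
  · by_contra! hle; exact h i hle hi
  · have := h i hmem; omega

lemma zv_eq_sum (n k : ℕ) : zv n k = ∑ i ∈ (zeckSupport n).filter (· < k), fib i := by
  simp_rw [zv, zeckDigit_eq_ite, ite_mul, one_mul, zero_mul]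
  rw [sum_ite_mem]
  congr 1
  ext i
  simp [and_comm]

lemma zell_eq (n : ℕ) : zell n = n.greatestFib + 1 :=
  le_antisymm (Nat.sInf_le (lt_fib_greatestFib_add_one n))
    (le_csInf ⟨_, lt_fib_greatestFib_add_one n⟩ fun _ hk => greatestFib_lt.2 hk)

lemma zeckSupport_fib {t : ℕ} (ht : 2 ≤ t) : zeckSupport (fib t) = {t} := by
  simpa using zeckSupport_sum_fib (P := {t}) ⟨by simpa using ht, by simp⟩

lemma zeckSupport_add_fib {n t : ℕ} (h : n.greatestFib + 2 ≤ t) :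
    zeckSupport (n + fib t) = insert t (zeckSupport n) := by
  have hS := isZeckSupport_zeckSupport n
  have hlt : ∀ i ∈ zeckSupport n, i + 2 ≤ t := fun i hi => by
    have := le_greatestFib_of_mem_zeckSupport hi; omega
  have hnot : t ∉ zeckSupport n := fun ht => by have := hlt t ht; omega
  have hP : IsZeckSupport (insert t (zeckSupport n)) := by
    refine ⟨?_, ?_⟩
    · simp only [mem_insert, forall_eq_or_imp]; exact ⟨by omega, hS.1⟩
    · simp only [mem_insert, forall_eq_or_imp]
      refine ⟨⟨fun _ => by omega, fun j hj hj' => by have := hlt j hj; omega⟩,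
        fun i hi => ⟨fun _ => hlt i hi, hS.2 i hi⟩⟩
  rw [← zeckSupport_sum_fib hP, sum_insert hnot, sum_zeckSupport, add_comm]

noncomputable def zeckTail (n : ℕ) : ℕ := n - fib n.greatestFib

lemma zeckTail_add_fib (n : ℕ) : zeckTail n + fib n.greatestFib = n :=
  Nat.sub_add_cancel (fib_greatestFib_le n)

lemma greatestFib_zeckTail_add_two_le {n : ℕ} (hn : n ≠ 0) :
    (zeckTail n).greatestFib + 2 ≤ n.greatestFib := by
  have h2 : 2 ≤ n.greatestFib := le_greatestFib.2 (by simp; omega)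
  have := greatestFib_sub_fib_greatestFib_le_greatestFib hn
  rw [zeckTail]; omega

lemma zeckSupport_eq_insert_zeckTail {n : ℕ} (hn : n ≠ 0) :
    zeckSupport n = insert n.greatestFib (zeckSupport (zeckTail n)) := by
  conv_lhs => rw [← zeckTail_add_fib n]
  exact zeckSupport_add_fib (greatestFib_zeckTail_add_two_le hn)

lemma zeckSupport_nonempty {n : ℕ} (hn : n ≠ 0) : (zeckSupport n).Nonempty :=
  nonempty_iff_ne_empty.2 (zeckSupport_eq_empty_iff.not.2 hn)

lemma RSep.add_fib {r k n₁ n₂ t : ℕ} (h : RSep r k n₁ n₂) (hn₂ : n₂ ≠ 0)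
    (ht : (n₁ + n₂).greatestFib + 2 ≤ t) : RSep r k n₁ (n₂ + fib t) := by
  obtain ⟨h₁, h₂⟩ := rsep_iff.1 h
  have hle : n₂.greatestFib + 2 ≤ t :=
    le_trans (Nat.add_le_add_right (greatestFib_mono (Nat.le_add_left n₂ n₁)) 2) ht
  obtain ⟨i, hi⟩ := zeckSupport_nonempty hn₂
  have := h₂ i hi
  have := le_greatestFib_of_mem_zeckSupport hi
  refine rsep_iff.2 ⟨h₁, ?_⟩
  rw [zeckSupport_add_fib hle]
  exact forall_mem_insert _ _ _ |>.2 ⟨by omega, h₂⟩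

section Bset

variable {r n : ℕ}

lemma filter_zeckSupport_of_mem_bset (hr : 2 ≤ r) (hn : n ∈ Bset r) :
    (zeckSupport n).filter (· < r + 1) = {r} := by
  have hsum : ∑ i ∈ (zeckSupport n).filter (· < r + 1), fib i = fib r :=
    (zv_eq_sum n (r + 1)).symm.trans hn.2
  rw [← zeckSupport_sum_fib ((isZeckSupport_zeckSupport n).mono (filter_subset _ _)), hsum,
    zeckSupport_fib hr]

lemma greatestFib_le_of_mem_bsetAux (hn : n ∈ BsetAux r) (h : zeckTail n ≠ 0) :
    n.greatestFib ≤ (zeckTail n).greatestFib + 2 * r + 1 := by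
  by_contra! hgt
  refine hn.2 ⟨zeckTail n, fib n.greatestFib, (zeckTail n).greatestFib + r + 1,
    Nat.pos_of_ne_zero h, fib_pos.2 (by omega), (zeckTail_add_fib n).symm,
    rsep_iff.2 ⟨fun i hi => ?_, fun i hi => ?_⟩⟩
  · have := le_greatestFib_of_mem_zeckSupport hi
    omega
  · rw [zeckSupport_fib (by omega), mem_singleton] at hi
    omega

lemma zeckTail_mem_bset (hr : 2 ≤ r) (hn : n ∈ Bset r) (hne : n ≠ fib r) :
    zeckTail n ∈ Bset r := by
  have hn0 : n ≠ 0 := hn.1.1.ne'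
  have hsupp := zeckSupport_eq_insert_zeckTail hn0
  have hlow := filter_zeckSupport_of_mem_bset hr hn
  have htail := greatestFib_zeckTail_add_two_le hn0
  have hrt : r < n.greatestFib := by
    have hr_mem : r ∈ zeckSupport n := (mem_filter.1 (hlow ▸ mem_singleton_self r)).1
    refine (le_greatestFib_of_mem_zeckSupport hr_mem).lt_of_ne fun hrt => hne ?_
    have h0 : zeckTail n = 0 := by
      by_contra h0
      obtain ⟨i, hi⟩ := zeckSupport_nonempty h0
      have := le_greatestFib_of_mem_zeckSupport hi
      have hi' : i ∈ (zeckSupport n).filter (· < r + 1) :=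
        mem_filter.2 ⟨hsupp ▸ mem_insert_of_mem hi, by omega⟩
      rw [hlow, mem_singleton] at hi'
      omega
    rw [← zeckTail_add_fib n, h0, zero_add, hrt]
  have hzv : zv (zeckTail n) (r + 1) = fib r := by
    rw [← hn.2, zv_eq_sum, zv_eq_sum, hsupp, filter_insert, if_neg (by omega)]
  have hpos : 0 < zeckTail n := by
    refine Nat.pos_of_ne_zero fun h0 => ?_
    rw [h0, zv_eq_sum, zeckSupport_eq_empty_iff.2 rfl, filter_empty, sum_empty] at hzv
    exact (fib_pos.2 (by omega)).ne hzv
  refine ⟨⟨hpos, ?_⟩, hzv⟩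
  rintro ⟨n₁, n₂, k, h₁, h₂, hsum, hsep⟩
  refine hn.1.2 ⟨n₁, n₂ + fib n.greatestFib, k, h₁, by positivity, ?_,
    hsep.add_fib h₂.ne' (hsum ▸ htail)⟩
  rw [← add_assoc, ← hsum, zeckTail_add_fib]

lemma bset_isGapDescent (hr : 2 ≤ r) :
    IsGapDescent (Bset r) zell zeckTail (fib r) (Icc 2 (2 * r + 1)) where
  mapsTo _ hn hne := zeckTail_mem_bset hr hn hne
  lt n hn _ := by
    have := greatestFib_zeckTail_add_two_le hn.1.1.ne'
    rw [zell_eq, zell_eq]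
    omega
  sub_mem n hn hne := by
    have := greatestFib_zeckTail_add_two_le hn.1.1.ne'
    have := greatestFib_le_of_mem_bsetAux hn.1 (zeckTail_mem_bset hr hn hne).1.1.ne'
    rw [zell_eq, zell_eq, mem_Icc]
    omega
  injOn a _ b _ _ _ hab hℓ := by
    rw [zell_eq, zell_eq, Nat.add_right_cancel_iff] at hℓ
    rw [← zeckTail_add_fib a, ← zeckTail_add_fib b, hab, hℓ]

lemma zell_fib (hr : 2 ≤ r) : zell (fib r) = r + 1 := by
  rw [zell_eq, greatestFib_fib (by omega)]

end Bset

end Zeckendorf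

open Real

lemma inv_goldenRatio_sq : goldenRatio⁻¹ ^ 2 = 1 - goldenRatio⁻¹ := by
  rw [inv_goldenRatio, neg_sq, goldenConj_sq]
  ring

lemma sum_Icc_pow_of_sq_eq {x : ℝ} (hx : x ^ 2 = 1 - x) (r : ℕ) :
    ∑ g ∈ Icc 2 (2 * r + 1), x ^ g = 1 - x ^ (2 * r) := by
  induction r with
  | zero => simp
  | succ r ih =>
    rw [show 2 * (r + 1) + 1 = 2 * r + 1 + 1 + 1 by ring, sum_Icc_succ_top (by omega),
      sum_Icc_succ_top (by omega), ih, show 2 * (r + 1) = 2 * r + 2 by ring]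
    linear_combination (x ^ (2 * r) * (x + 1)) * hx

lemma sum_Icc_pow_le_of_le_inv_goldenRatio (r : ℕ) {t : ℝ} (ht₀ : 0 ≤ t)
    (ht : t ≤ goldenRatio⁻¹) :
    ∑ g ∈ Icc 2 (2 * r + 1), t ^ g ≤ 1 - goldenRatio⁻¹ ^ (2 * r) :=
  (sum_le_sum fun g _ => pow_le_pow_left₀ ht₀ ht g).trans_eq
    (sum_Icc_pow_of_sq_eq inv_goldenRatio_sq r)

lemma sum_Icc_pow_lt_one_of_le_inv_goldenRatio (r : ℕ) {t : ℝ} (ht₀ : 0 ≤ t)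
    (ht : t ≤ goldenRatio⁻¹) :
    ∑ g ∈ Icc 2 (2 * r + 1), t ^ g < 1 := by
  have : 0 < goldenRatio⁻¹ ^ (2 * r) := by positivity
  linarith [sum_Icc_pow_le_of_le_inv_goldenRatio r ht₀ ht]

lemma pow_mul_tsum_bset_le {r : ℕ} (hr : 2 ≤ r) {t : ℝ} (ht₀ : 0 ≤ t)
    (ht : t ≤ goldenRatio⁻¹) : t ^ (r + 1) * ∑' n : Bset r, t ^ zell n ≤ 1 - goldenRatio⁻¹ := by
  set x₀ := goldenRatio⁻¹
  have hx₀ : 0 < x₀ ^ (2 * r) := by positivity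
  have hgap : x₀ ^ (2 * r) ≤ 1 - ∑ g ∈ Icc 2 (2 * r + 1), t ^ g := by
    linarith [sum_Icc_pow_le_of_le_inv_goldenRatio r ht₀ ht]
  have htsum := (bset_isGapDescent hr).tsum_pow_le ht₀
    (sum_Icc_pow_lt_one_of_le_inv_goldenRatio r ht₀ ht)
  rw [zell_fib hr] at htsum
  calc t ^ (r + 1) * ∑' n : Bset r, t ^ zell n
      ≤ t ^ (r + 1) * (t ^ (r + 1) / x₀ ^ (2 * r)) := by
        gcongr
        exact htsum.trans (div_le_div_of_nonneg_left (by positivity) hx₀ hgap)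
    _ = t ^ (2 * r + 2) / x₀ ^ (2 * r) := by ring
    _ ≤ x₀ ^ (2 * r + 2) / x₀ ^ (2 * r) := by gcongr
    _ = 1 - x₀ := by rw [pow_add, mul_div_cancel_left₀ _ hx₀.ne', inv_goldenRatio_sq]

lemma norm_neg_one_pow_mul_pow (k m : ℕ) (x : ℂ) : ‖(-1 : ℂ) ^ k * x ^ m‖ = ‖x‖ ^ m := by
  simp

-- `B(x, -1)` of the paper, with `f` in the exponent of `-1`.
noncomputable def bsetSeries (r : ℕ) (f : ℕ → ℕ) (x : ℂ) : ℂ :=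
  ∑' n : Bset r, (-1 : ℂ) ^ f n * x ^ zell n

section Series

variable {r : ℕ} (f : ℕ → ℕ)

lemma norm_bsetSeries_le (hr : 2 ≤ r) {x : ℂ}
    (hx : ∑ g ∈ Icc 2 (2 * r + 1), ‖x‖ ^ g < 1) :
    ‖bsetSeries r f x‖ ≤ ∑' n : Bset r, ‖x‖ ^ zell n := by
  have hs : Summable fun n : Bset r => ‖(-1 : ℂ) ^ f n * x ^ zell n‖ := by
    simpa only [norm_neg_one_pow_mul_pow] using
      (bset_isGapDescent hr).summable_pow (norm_nonneg x) hx
  exact (norm_tsum_le_tsum_norm hs).trans_eq (by simp_rw [norm_neg_one_pow_mul_pow])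

lemma continuousOn_bsetSeries (hr : 2 ≤ r) {t : ℝ} (ht₀ : 0 ≤ t)
    (ht : ∑ g ∈ Icc 2 (2 * r + 1), t ^ g < 1) :
    ContinuousOn (bsetSeries r f) (Metric.ball 0 t) :=
  continuousOn_tsum (fun _ => (continuous_const.mul (continuous_pow _)).continuousOn)
    ((bset_isGapDescent hr).summable_pow ht₀ ht) fun n x hx => by
      rw [norm_neg_one_pow_mul_pow]
      exact pow_le_pow_left₀ (norm_nonneg x) (mem_ball_zero_iff.1 hx).le _

end Series

lemma tsum_neg_one_pow_mul_lt {r : ℕ} (hr : 2 ≤ r) (f : ℕ → ℕ) {n₀ : ℕ} (hn₀ : n₀ ∈ Bset r)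
    (hodd : Odd (f n₀)) {t : ℝ} (ht₀ : 0 < t) (ht : ∑ g ∈ Icc 2 (2 * r + 1), t ^ g < 1) :
    ∑' n : Bset r, (-1 : ℝ) ^ f n * t ^ zell n < ∑' n : Bset r, t ^ zell n := by
  have hs := (bset_isGapDescent hr).summable_pow ht₀.le ht
  refine Summable.tsum_lt_tsum (i := ⟨n₀, hn₀⟩) (fun n => ?_) ?_
    (hs.of_norm_bounded fun n => by simp [abs_of_pos ht₀]) hs
  · rcases neg_one_pow_eq_or ℝ (f n) with h | h <;> rw [h] <;> linarith [pow_nonneg ht₀.le (zell n)]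
  · rw [hodd.neg_one_pow]
    linarith [pow_pos ht₀ (zell n₀)]

lemma add_pow_mul_bsetSeries_ne_one {r : ℕ} (hr : 2 ≤ r) (f : ℕ → ℕ) {n₀ : ℕ}
    (hn₀ : n₀ ∈ Bset r) (hodd : Odd (f n₀)) {x : ℂ} (hx : ‖x‖ ≤ goldenRatio⁻¹) :
    x + x ^ (r + 1) * bsetSeries r f x ≠ 1 := by
  intro h
  set x₀ := goldenRatio⁻¹
  have hx₀ : 0 < x₀ := by positivity
  have hmaj : ‖x ^ (r + 1) * bsetSeries r f x‖ ≤ 1 - x₀ := by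
    rw [norm_mul, norm_pow]
    exact (mul_le_mul_of_nonneg_left (norm_bsetSeries_le f hr
      (sum_Icc_pow_lt_one_of_le_inv_goldenRatio r (norm_nonneg x) hx)) (by positivity)).trans
      (pow_mul_tsum_bset_le hr (norm_nonneg x) hx)
  -- Real parts: `1 ≤ re x + (1 - x₀)`, which forces `x = x₀`.
  have hre : x.re = x₀ := by
    have h' := congrArg Complex.re h
    rw [Complex.add_re, Complex.one_re] at h'
    linarith [Complex.re_le_norm x, Complex.re_le_norm (x ^ (r + 1) * bsetSeries r f x)]
  have hx_eq : x = x₀ := by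
    have him : x.im = 0 := Complex.abs_re_eq_norm.1 (by
      rw [hre, abs_of_pos hx₀]
      linarith [Complex.re_le_norm x])
    exact Complex.ext (by simp [hre]) (by simp [him])
  have hreal : bsetSeries r f x₀ = ((∑' n : Bset r, (-1 : ℝ) ^ f n * x₀ ^ zell n : ℝ) : ℂ) := by
    rw [bsetSeries, Complex.ofReal_tsum]
    push_cast
    rfl
  rw [hx_eq, hreal] at h
  have hlt := tsum_neg_one_pow_mul_lt hr f hn₀ hodd hx₀
    (sum_Icc_pow_lt_one_of_le_inv_goldenRatio r hx₀.le le_rfl)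
  have hle := pow_mul_tsum_bset_le hr hx₀.le le_rfl
  have : x₀ + x₀ ^ (r + 1) * ∑' n : Bset r, (-1 : ℝ) ^ f n * x₀ ^ zell n = 1 := by
    exact_mod_cast h
  linarith [mul_lt_mul_of_pos_left hlt (pow_pos hx₀ (r + 1))]

theorem no_zero_of_denominator_general (p q r : ℕ) (hr : 2 ≤ r)
    (hodd : ∃ n'' ∈ Bset r, Odd (sphi (p * n'') + sphi (q * n''))) :
    ∃ x1 : ℝ, 1 / Real.goldenRatio < x1 ∧
      ∀ x : ℂ, ‖x‖ ≤ x1 →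
        x + x ^ (r + 1) *
          (∑' n : Bset r,
            (-1 : ℂ) ^ (sphi (p * (n : ℕ)) + sphi (q * (n : ℕ))) * x ^ zell (n : ℕ))
          ≠ 1 := by
  obtain ⟨n'', hn'', hodd⟩ := hodd
  set f : ℕ → ℕ := fun n => sphi (p * n) + sphi (q * n)
  set T : ℂ → ℂ := fun x => x + x ^ (r + 1) * bsetSeries r f x
  set x₀ := goldenRatio⁻¹
  have hx₀ : 0 < x₀ := by positivity
  obtain ⟨t₁, hx₀t₁, ht₁⟩ : ∃ t₁, x₀ < t₁ ∧ ∑ g ∈ Icc 2 (2 * r + 1), t₁ ^ g < 1 :=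
    (((continuous_finsetSum _ fun g _ => continuous_pow g).tendsto x₀).eventually
      (gt_mem_nhds (sum_Icc_pow_lt_one_of_le_inv_goldenRatio r hx₀.le le_rfl))).exists_gt
  have hT : ContinuousOn T (Metric.ball 0 t₁) :=
    continuousOn_id.add ((continuous_pow _).continuousOn.mul
      (continuousOn_bsetSeries f hr (hx₀.trans hx₀t₁).le ht₁))
  obtain ⟨δ, hδ, hsub⟩ := (isCompact_closedBall (0 : ℂ) x₀).exists_cthickening_subset_open
    (hT.isOpen_inter_preimage Metric.isOpen_ball isOpen_compl_singleton) fun x hx =>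
      ⟨Metric.closedBall_subset_ball hx₀t₁ hx,
        add_pow_mul_bsetSeries_ne_one hr f hn'' hodd (mem_closedBall_zero_iff.1 hx)⟩
  refine ⟨δ + x₀, by rw [one_div]; linarith, fun x hx => (hsub ?_).2⟩
  rwa [cthickening_closedBall hδ.le hx₀.le, mem_closedBall_zero_iff]

/-- If `f(n) = s_φ(pn) + s_φ(qn)` is `r`-quasi-additive and `𝓑` contains
elements of even and of odd `f`-value, then there is `x₁ > 1/φ` such that
`x + x^{r+1}·B(x,-1) ≠ 1` for all complex `x` with `|x| ≤ x₁`. -/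
theorem no_zero_of_denominator (p q r : ℕ) (hp : 2 ≤ p) (hpq : p < q) (hr : 2 ≤ r)
    (hqa : QuasiAdd r (fun n => sphi (p * n) + sphi (q * n)))
    (heven : ∃ n' ∈ Bset r, Even (sphi (p * n') + sphi (q * n')))
    (hodd : ∃ n'' ∈ Bset r, Odd (sphi (p * n'') + sphi (q * n''))) :
    ∃ x1 : ℝ, 1 / Real.goldenRatio < x1 ∧
      ∀ x : ℂ, ‖x‖ ≤ x1 →
        x + x ^ (r + 1) *
          (∑' n : Bset r,
            (-1 : ℂ) ^ (sphi (p * (n : ℕ)) + sphi (q * (n : ℕ))) * x ^ zell (n : ℕ))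
          ≠ 1 :=
  no_zero_of_denominator_general p q r hr hodd
end
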